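/- arXiv:2103.12959 — 6 statements merged into one kernel-verified Lean document; each statement's English description precedes it below -/
import Mathlib

section
/- Representer theorem with nonlinear constraints: Let H be a real Hilbert space with inner product induced by a bijective symmetric positive operator, φ₁,…,φ_N bounded linear functionals on H with invertible Gram matrix Θ (Θ_{ij} = φ_i(K φ_j) where K is the Riesz-type covariance operator), G : R^N → R^I and F : R^N → R^M continuous, o ∈ R^I, y ∈ R^M, γ > 0. Then u† ∈ H minimizes ‖u‖² + γ⁻² |G(Φ(u)) − o|² subject to F(Φ(u)) = y, where Φ(u) = (φ₁(u),…,φ_N(u)), if and only if u† = Σ_n z†_n χ_n where χ_i = Σ_n (Θ⁻¹)_{i,n} K φ_n and z† ∈ R^N minimizes zᵀ Θ⁻¹ z + γ⁻² |G(z) − o|² subject to F(z) = y. -/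
open Matrix
open scoped RealInnerProductSpace

/-- Representer theorem with nonlinear constraints (Proposition 2.3): `u†` minimizes
`‖u‖² + γ⁻²|G(Φ(u)) − o|²` subject to `F(Φ(u)) = y` iff `u† = Σ z†ₙ χₙ` with `z†`
minimizing the reduced finite-dimensional problem. -/
theorem stmt_4 {H : Type*} [NormedAddCommGroup H] [InnerProductSpace ℝ H] [CompleteSpace H]
    (N I M : ℕ) (φ : Fin N → H →L[ℝ] ℝ)
    (k : Fin N → H) (hk : ∀ n v, φ n v = ⟪k n, v⟫)
    (Θ : Matrix (Fin N) (Fin N) ℝ) (hΘdef : ∀ i j, Θ i j = φ i (k j))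
    (hΘ : IsUnit Θ.det)
    (χ : Fin N → H) (hχ : ∀ i, χ i = ∑ n, Θ⁻¹ i n • k n)
    (G : (Fin N → ℝ) → EuclideanSpace ℝ (Fin I)) (hG : Continuous G)
    (F : (Fin N → ℝ) → (Fin M → ℝ)) (hF : Continuous F)
    (o : EuclideanSpace ℝ (Fin I)) (y : Fin M → ℝ) (γ : ℝ) (hγ : 0 < γ)
    (udag : H) :
    (F (fun n => φ n udag) = y ∧
      ∀ u : H, F (fun n => φ n u) = y →
        ‖udag‖ ^ 2 + (γ ^ 2)⁻¹ * ‖G (fun n => φ n udag) - o‖ ^ 2 ≤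
          ‖u‖ ^ 2 + (γ ^ 2)⁻¹ * ‖G (fun n => φ n u) - o‖ ^ 2) ↔
    (∃ zdag : Fin N → ℝ, udag = ∑ n, zdag n • χ n ∧ F zdag = y ∧
      ∀ z : Fin N → ℝ, F z = y →
        zdag ⬝ᵥ Θ⁻¹.mulVec zdag + (γ ^ 2)⁻¹ * ‖G zdag - o‖ ^ 2 ≤
          z ⬝ᵥ Θ⁻¹.mulVec z + (γ ^ 2)⁻¹ * ‖G z - o‖ ^ 2) := by
  -- basic facts
  have hkk : ∀ i j, ⟪k i, k j⟫ = Θ i j := fun i j => by rw [hΘdef, hk]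
  have hmul : Θ * Θ⁻¹ = 1 := Matrix.mul_nonsing_inv Θ hΘ
  have hΘsymm : Θᵀ = Θ := by
    ext i j; rw [Matrix.transpose_apply, ← hkk, ← hkk, real_inner_comm]
  have hinvsymm : ∀ i j, Θ⁻¹ i j = Θ⁻¹ j i := by
    have h : Θ⁻¹ᵀ = Θ⁻¹ := by rw [Matrix.transpose_nonsing_inv, hΘsymm]
    intro i j
    calc Θ⁻¹ i j = Θ⁻¹ᵀ i j := by rw [h]
      _ = Θ⁻¹ j i := Matrix.transpose_apply _ _ _
  have hφk : ∀ i n, φ i (k n) = Θ i n := fun i n => by rw [hk, hkk]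
  have hφχ : ∀ i j, φ i (χ j) = (1 : Matrix (Fin N) (Fin N) ℝ) i j := by
    intro i j
    rw [hχ, map_sum]
    simp only [_root_.map_smul, smul_eq_mul, hφk]
    rw [← hmul, Matrix.mul_apply]
    exact Finset.sum_congr rfl fun n _ => by rw [hinvsymm j n]; ring
  have hΦ : ∀ (z : Fin N → ℝ) (i), φ i (∑ n, z n • χ n) = z i := by
    intro z i
    rw [map_sum]
    simp only [_root_.map_smul, smul_eq_mul, hφχ]
    simp [Matrix.one_apply]
  have hχχ : ∀ i j, ⟪χ i, χ j⟫ = Θ⁻¹ i j := by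
    intro i j
    rw [hχ i, hχ j, sum_inner]
    simp only [inner_smul_left, inner_sum, inner_smul_right, hkk, RCLike.star_def,
      starRingEnd_apply, star_trivial]
    have key : ∀ m, ∑ n, Θ⁻¹ j n * Θ m n = (1 : Matrix (Fin N) (Fin N) ℝ) m j := by
      intro m
      rw [← hmul, Matrix.mul_apply]
      exact Finset.sum_congr rfl fun n _ => by rw [hinvsymm j n]; ring
    calc ∑ m, ∑ n, Θ⁻¹ j n * (Θ⁻¹ i m * Θ m n)
        = ∑ m, Θ⁻¹ i m * (1 : Matrix (Fin N) (Fin N) ℝ) m j := by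
          refine Finset.sum_congr rfl fun m _ => ?_
          rw [← key m, Finset.mul_sum]
          exact Finset.sum_congr rfl fun n _ => by ring
      _ = Θ⁻¹ i j := by simp [Matrix.one_apply]
  have hnorm : ∀ z : Fin N → ℝ, ‖∑ n, z n • χ n‖ ^ 2 = z ⬝ᵥ Θ⁻¹.mulVec z := by
    intro z
    rw [← real_inner_self_eq_norm_sq, sum_inner]
    simp only [inner_smul_left, inner_sum, inner_smul_right, hχχ, RCLike.star_def,
      starRingEnd_apply, star_trivial]
    simp [dotProduct, Matrix.mulVec, Finset.mul_sum, mul_comm, mul_left_comm]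
  -- orthogonal decomposition
  have hdecomp : ∀ u : H,
      ‖u‖ ^ 2 = ‖∑ n, φ n u • χ n‖ ^ 2 + ‖u - ∑ n, φ n u • χ n‖ ^ 2 := by
    intro u
    set v : H := ∑ n, φ n u • χ n with hv
    have hkperp : ∀ i, ⟪k i, u - v⟫ = 0 := by
      intro i
      rw [← hk]
      have hv2 : φ i v = φ i u := by rw [hv]; exact hΦ (fun n => φ n u) i
      simp only [map_sub, hv2]
      ring
    have hvperp : ⟪v, u - v⟫ = 0 := by
      rw [hv, sum_inner]
      apply Finset.sum_eq_zero
      intro n _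
      rw [inner_smul_left, hχ n, sum_inner]
      have : ∀ m ∈ Finset.univ, ⟪Θ⁻¹ n m • k m, u - v⟫ = 0 := by
        intro m _
        rw [inner_smul_left, hkperp m]
        ring
      rw [Finset.sum_eq_zero this]
      simp
    have : u = v + (u - v) := by abel
    calc ‖u‖ ^ 2 = ‖v + (u - v)‖ ^ 2 := by rw [← this]
      _ = ‖v‖ ^ 2 + 2 * ⟪v, u - v⟫ + ‖u - v‖ ^ 2 := norm_add_sq_real v (u - v)
      _ = ‖v‖ ^ 2 + ‖u - v‖ ^ 2 := by rw [hvperp]; ring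
  constructor
  · rintro ⟨hfeas, hmin⟩
    set zdag : Fin N → ℝ := fun n => φ n udag with hz
    set v : H := ∑ n, zdag n • χ n with hv
    have hΦv : (fun n => φ n v) = zdag := funext fun i => hΦ zdag i
    have hvfeas : F (fun n => φ n v) = y := by rw [hΦv]; exact hfeas
    have h1 := hmin v hvfeas
    rw [hΦv] at h1
    have hle : ‖udag‖ ^ 2 ≤ ‖v‖ ^ 2 := by linarith
    have hdu := hdecomp udag
    have hge : ‖v‖ ^ 2 ≤ ‖udag‖ ^ 2 := by
      have hveq : v = ∑ n, (φ n) udag • χ n := rfl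
      rw [hdu, ← hveq]
      nlinarith [sq_nonneg ‖udag - v‖]
    have heqn : ‖udag - v‖ ^ 2 = 0 := by
      have := hdecomp udag; nlinarith
    have huv : udag = v := by
      have h0 : udag - v = 0 := by
        rw [← norm_eq_zero]; nlinarith [norm_nonneg (udag - v)]
      exact sub_eq_zero.mp h0
    refine ⟨zdag, huv, hfeas, ?_⟩
    intro z hzfeas
    have hΦz : (fun n => φ n (∑ n, z n • χ n)) = z := funext fun i => hΦ z i
    have h2 := hmin (∑ n, z n • χ n) (by rw [hΦz]; exact hzfeas)
    rw [hΦz, hnorm z] at h2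
    have hud : ‖udag‖ ^ 2 = zdag ⬝ᵥ Θ⁻¹.mulVec zdag := by rw [huv, hv, hnorm]
    rw [hud] at h2
    exact h2
  · rintro ⟨zdag, huv, hzfeas, hzmin⟩
    have hΦu : (fun n => φ n udag) = zdag := by
      rw [huv]; exact funext fun i => hΦ zdag i
    have hud : ‖udag‖ ^ 2 = zdag ⬝ᵥ Θ⁻¹.mulVec zdag := by rw [huv, hnorm]
    constructor
    · rw [hΦu]; exact hzfeas
    · intro u hufeas
      set z : Fin N → ℝ := fun n => φ n u with hzdef
      have h3 := hzmin z hufeas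
      have hle : z ⬝ᵥ Θ⁻¹.mulVec z ≤ ‖u‖ ^ 2 := by
        rw [hdecomp u, ← hnorm z]
        have heq : (∑ n, φ n u • χ n) = ∑ n, z n • χ n := rfl
        rw [heq]
        nlinarith [sq_nonneg ‖u - ∑ n, z n • χ n‖]
      rw [hΦu, hud]
      calc zdag ⬝ᵥ Θ⁻¹.mulVec zdag + (γ ^ 2)⁻¹ * ‖G zdag - o‖ ^ 2
          ≤ z ⬝ᵥ Θ⁻¹.mulVec z + (γ ^ 2)⁻¹ * ‖G z - o‖ ^ 2 := h3
        _ ≤ ‖u‖ ^ 2 + (γ ^ 2)⁻¹ * ‖G z - o‖ ^ 2 := by linarith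
end

section
/- Two-level reduction: With H a Hilbert space, φ₁,…,φ_N ∈ H* with invertible Gram matrix Θ, F : R^N → R^M continuous and y ∈ R^M, the infimum of ‖u‖² over {u : F(Φ(u)) = y} equals the infimum of zᵀ Θ⁻¹ z over {z ∈ R^N : F(z) = y}, where Φ(u) = (φ₁(u),…,φ_N(u)); moreover for each feasible z, the inner problem min{‖u‖² : Φ(u) = z} has value zᵀ Θ⁻¹ z. -/
open Matrix
open scoped RealInnerProductSpace

/-- Two-level reduction: the infimum of `‖u‖²` over `{u : F(Φ(u)) = y}` equals the infimum
of `zᵀΘ⁻¹z` over `{z : F(z) = y}`; moreover for each feasible `z` the inner problem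
`min{‖u‖² : Φ(u) = z}` has value `zᵀΘ⁻¹z`. -/
theorem stmt_7 {H : Type*} [NormedAddCommGroup H] [InnerProductSpace ℝ H] [CompleteSpace H]
    (N M : ℕ) (φ : Fin N → H →L[ℝ] ℝ)
    (k : Fin N → H) (hk : ∀ n v, φ n v = ⟪k n, v⟫)
    (Θ : Matrix (Fin N) (Fin N) ℝ) (hΘdef : ∀ i j, Θ i j = φ i (k j))
    (hΘ : IsUnit Θ.det)
    (F : (Fin N → ℝ) → (Fin M → ℝ)) (hF : Continuous F)
    (y : Fin M → ℝ) :
    sInf ((fun u : H => ‖u‖ ^ 2) '' {u | F (fun n => φ n u) = y}) =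
      sInf ((fun z : Fin N → ℝ => z ⬝ᵥ Θ⁻¹.mulVec z) '' {z | F z = y}) ∧
    ∀ z : Fin N → ℝ, F z = y →
      IsLeast ((fun u : H => ‖u‖ ^ 2) '' {u | (fun n => φ n u) = z})
        (z ⬝ᵥ Θ⁻¹.mulVec z) := by
  have key : ∀ z : Fin N → ℝ,
      IsLeast ((fun u : H => ‖u‖ ^ 2) '' {u | (fun n => φ n u) = z})
        (z ⬝ᵥ Θ⁻¹.mulVec z) := by
    intro z
    set c : Fin N → ℝ := Θ⁻¹.mulVec z with hc
    set u₀ : H := ∑ i, c i • k i with hu₀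
    have hinner : ∀ v : H, ⟪u₀, v⟫ = ∑ i, c i * φ i v := by
      intro v
      simp [hu₀, sum_inner, real_inner_smul_left, hk]
    have hφu₀ : ∀ n, φ n u₀ = z n := by
      intro n
      have h1 : φ n u₀ = Θ.mulVec c n := by
        rw [hk]
        simp only [hu₀, inner_sum, real_inner_smul_right, Matrix.mulVec, dotProduct]
        refine Finset.sum_congr rfl fun i _ => ?_
        rw [hΘdef, hk, mul_comm]
      rw [h1, hc, Matrix.mulVec_mulVec, Matrix.mul_nonsing_inv Θ hΘ, Matrix.one_mulVec]
    have hval : ‖u₀‖ ^ 2 = z ⬝ᵥ Θ⁻¹.mulVec z := by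
      rw [← real_inner_self_eq_norm_sq, hinner u₀]
      simp only [hφu₀]
      rw [← hc, dotProduct_comm]
      rfl
    constructor
    · exact ⟨u₀, funext hφu₀, hval⟩
    · rintro x ⟨u, hu, rfl⟩
      have hz : ∀ n, φ n u = z n := fun n => congrFun hu n
      have horth : ⟪u₀, u⟫ = ‖u₀‖ ^ 2 := by
        rw [hinner u, ← real_inner_self_eq_norm_sq, hinner u₀]
        simp [hφu₀, hz]
      have hsub : ‖u - u₀‖ ^ 2 = ‖u‖ ^ 2 - ‖u₀‖ ^ 2 := by
        rw [norm_sub_sq_real, real_inner_comm, horth]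
        ring
      have hnn := sq_nonneg ‖u - u₀‖
      rw [hsub] at hnn
      show z ⬝ᵥ Θ⁻¹.mulVec z ≤ ‖u‖ ^ 2
      rw [← hval]
      linarith
  refine ⟨?_, fun z _ => key z⟩
  set A := (fun u : H => ‖u‖ ^ 2) '' {u | F (fun n => φ n u) = y}
  set B := (fun z : Fin N → ℝ => z ⬝ᵥ Θ⁻¹.mulVec z) '' {z | F z = y}
  have hBnonneg : ∀ b ∈ B, (0:ℝ) ≤ b := by
    rintro b ⟨z, hz, rfl⟩
    obtain ⟨⟨u, hu, huval⟩, -⟩ := key z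
    dsimp only at huval ⊢
    rw [← huval]; positivity
  have hAnonneg : ∀ a ∈ A, (0:ℝ) ≤ a := by
    rintro a ⟨u, hu, rfl⟩; positivity
  by_cases hBne : B.Nonempty
  · obtain ⟨b, z, hz, rfl⟩ := hBne
    obtain ⟨⟨u₀, hu₀, hval⟩, -⟩ := key z
    have hu₀' : (fun n => φ n u₀) = z := hu₀
    have hAne : A.Nonempty := ⟨‖u₀‖ ^ 2, ⟨u₀, by
      show F (fun n => φ n u₀) = y
      rw [hu₀']; exact hz, rfl⟩⟩
    apply le_antisymm
    · -- sInf A ≤ sInf B : B ⊆ A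
      have hBsub : B ⊆ A := by
        rintro b ⟨w, hw, rfl⟩
        obtain ⟨⟨v, hv, hvval⟩, -⟩ := key w
        have hv' : (fun n => φ n v) = w := hv
        exact ⟨v, by show F (fun n => φ n v) = y; rw [hv']; exact hw, hvval⟩
      exact csInf_le_csInf ⟨0, fun a ha => hAnonneg a ha⟩ ⟨_, Set.mem_image_of_mem _ hz⟩ hBsub
    · -- sInf B ≤ sInf A
      apply le_csInf hAne
      rintro a ⟨u, hu, rfl⟩
      have hmem : (fun n => φ n u) ∈ {z | F z = y} := hu
      obtain ⟨-, hlb⟩ := key (fun n => φ n u)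
      have h1 : ((fun n => φ n u) ⬝ᵥ Θ⁻¹.mulVec (fun n => φ n u)) ≤ ‖u‖ ^ 2 :=
        hlb ⟨u, rfl, rfl⟩
      exact le_trans (csInf_le ⟨0, fun b hb => hBnonneg b hb⟩ ⟨_, hmem, rfl⟩) h1
  · have hAne : A = ∅ := by
      rw [Set.eq_empty_iff_forall_notMem]
      rintro a ⟨u, hu, rfl⟩
      exact hBne ⟨_, ⟨(fun n => φ n u), hu, rfl⟩⟩
    rw [hAne, Set.not_nonempty_iff_eq_empty.mp hBne]
end

section
/- Uniqueness and energy inequality under the one-sided tangency condition: Let H be a Hilbert space, φ₁,…,φ_N ∈ H* with invertible Gram matrix Θ, F : R^N → R^M, y ∈ R^M, and let u† = Σ_n z†_n χ_n with z† a minimizer of zᵀΘ⁻¹z over {F(z) = y}. Assume (z − z†)ᵀ Θ⁻¹ z† ≥ 0 for all z with F(z) = y. Then for every v ∈ H with F(Φ(v)) = y one has ‖v − u†‖² ≤ ‖v‖² − ‖u†‖²; in particular the minimizer u† is unique. -/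
open Matrix
open scoped RealInnerProductSpace

/-- Uniqueness and energy inequality under the one-sided tangency condition
`(z − z†)ᵀΘ⁻¹z† ≥ 0` on the feasible set: every feasible `v` satisfies
`‖v − u†‖² ≤ ‖v‖² − ‖u†‖²`, and the minimizer `u†` is unique. -/
theorem stmt_9 {H : Type*} [NormedAddCommGroup H] [InnerProductSpace ℝ H] [CompleteSpace H]
    (N M : ℕ) (φ : Fin N → H →L[ℝ] ℝ)
    (k : Fin N → H) (hk : ∀ n v, φ n v = ⟪k n, v⟫)
    (Θ : Matrix (Fin N) (Fin N) ℝ) (hΘdef : ∀ i j, Θ i j = φ i (k j))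
    (hΘ : IsUnit Θ.det)
    (χ : Fin N → H) (hχ : ∀ i, χ i = ∑ n, Θ⁻¹ i n • k n)
    (F : (Fin N → ℝ) → (Fin M → ℝ)) (y : Fin M → ℝ)
    (zdag : Fin N → ℝ) (hzfeas : F zdag = y)
    (hzmin : ∀ z : Fin N → ℝ, F z = y → zdag ⬝ᵥ Θ⁻¹.mulVec zdag ≤ z ⬝ᵥ Θ⁻¹.mulVec z)
    (hside : ∀ z : Fin N → ℝ, F z = y → 0 ≤ (z - zdag) ⬝ᵥ Θ⁻¹.mulVec zdag)
    (udag : H) (hudag : udag = ∑ n, zdag n • χ n) :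
    (∀ v : H, F (fun n => φ n v) = y → ‖v - udag‖ ^ 2 ≤ ‖v‖ ^ 2 - ‖udag‖ ^ 2) ∧
    (∀ v : H, F (fun n => φ n v) = y → ‖v‖ ≤ ‖udag‖ → v = udag) := by
  -- Θ is symmetric
  have hΘsymm : ∀ i j, Θ i j = Θ j i := by
    intro i j
    rw [hΘdef, hΘdef, hk, hk, real_inner_comm]
  have hΘT : Θᵀ = Θ := by ext i j; exact hΘsymm j i
  -- inner product of udag with any v
  have hinner : ∀ v : H, ⟪udag, v⟫ = zdag ⬝ᵥ Θ⁻¹.mulVec (fun n => φ n v) := by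
    intro v
    rw [hudag, sum_inner]
    simp only [real_inner_smul_left, hχ, sum_inner, real_inner_smul_left,
      dotProduct, mulVec, Finset.mul_sum, hk]
  -- φ n udag = zdag n
  have hphiudag : ∀ n, φ n udag = zdag n := by
    intro n
    have h1 : (fun m => ⟪k n, k m⟫) = fun m => Θ m n := by
      funext m; rw [hΘdef m n, hk]; exact real_inner_comm _ _
    rw [hk, hudag, inner_sum]
    simp only [real_inner_smul_right, hχ, inner_sum, real_inner_smul_right]
    have h2 : ∀ i, (∑ m, Θ⁻¹ i m * ⟪k n, k m⟫) = (Θ⁻¹ * Θ) i n := by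
      intro i
      simp only [Matrix.mul_apply]
      congr 1; funext m; rw [hΘdef m n, hk, real_inner_comm]
    calc (∑ i, zdag i * ∑ m, Θ⁻¹ i m * ⟪k n, k m⟫)
        = ∑ i, zdag i * (Θ⁻¹ * Θ) i n := by
          congr 1; funext i; rw [h2]
      _ = ∑ i, zdag i * (1 : Matrix (Fin N) (Fin N) ℝ) i n := by
          rw [Matrix.nonsing_inv_mul Θ hΘ]
      _ = zdag n := by simp [Matrix.one_apply]
  -- norm of udag squared
  have key : ∀ v : H, F (fun n => φ n v) = y → 0 ≤ ⟪udag, v - udag⟫ := by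
    intro v hv
    have hfeas := hside (fun n => φ n v) hv
    have : ⟪udag, v - udag⟫ = ((fun n => φ n v) - zdag) ⬝ᵥ Θ⁻¹.mulVec zdag := by
      rw [hinner (v - udag)]
      have hφ : (fun n => φ n (v - udag)) = (fun n => φ n v) - zdag := by
        funext n; simp [hphiudag n]
      rw [hφ]
      -- symmetry of Θ⁻¹
      rw [Matrix.dotProduct_mulVec]
      rw [show Θ⁻¹.vecMul zdag = Θ⁻¹.mulVec zdag by
        rw [← Matrix.mulVec_transpose, Matrix.transpose_nonsing_inv, hΘT]]
      exact dotProduct_comm _ _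
    rw [this]; exact hfeas
  have main : ∀ v : H, F (fun n => φ n v) = y → ‖v - udag‖ ^ 2 ≤ ‖v‖ ^ 2 - ‖udag‖ ^ 2 := by
    intro v hv
    have h := key v hv
    have hexp : ‖v - udag‖ ^ 2 = ‖v‖ ^ 2 - 2 * ⟪v, udag⟫ + ‖udag‖ ^ 2 :=
      norm_sub_sq_real v udag
    have hiu : ⟪udag, v - udag⟫ = ⟪v, udag⟫ - ‖udag‖ ^ 2 := by
      rw [inner_sub_right, real_inner_self_eq_norm_sq, real_inner_comm]
    nlinarith [h, hexp, hiu]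
  refine ⟨main, fun v hv hle => ?_⟩
  have h1 := main v hv
  have h2 : ‖v‖ ^ 2 ≤ ‖udag‖ ^ 2 := by
    have := norm_nonneg v; nlinarith
  have h3 : ‖v - udag‖ ^ 2 ≤ 0 := by linarith
  have h4 : ‖v - udag‖ = 0 := by nlinarith [norm_nonneg (v - udag)]
  exact sub_eq_zero.mp (norm_eq_zero.mp h4)
end

section
/- Pointwise error bound for conditioned GP MAP estimators: Let H be a Hilbert space continuously embedded in a Banach space B, φ ∈ B* ⊂ H*, and φ₁,…,φ_N ∈ H* with invertible Gram matrix Θ. Let u* ∈ H satisfy F(Φ(u*)) = y and let u† = Σ_n z†_n χ_n with z† minimizing zᵀΘ⁻¹z over {F(z)=y}. Assume B is also a Hilbert space on the relevant subspace, and let A_{ij} = ⟨χ_i, χ_j⟩_B. Then |φ(u†) − φ(u*)| ≤ σ(φ)‖u*‖_H + ε ‖φ‖_{B*}, where σ(φ) is the distance from Kφ to span{Kφ_n} and ε² = max{(z−z†)ᵀ A (z−z†) : F(z)=y, zᵀΘ⁻¹z ≤ ‖u*‖²}. -/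
open Matrix
open scoped RealInnerProductSpace

/-- Pointwise error bound for conditioned GP MAP estimators (Proposition 5.2):
`|φ(u†) − φ(u*)| ≤ σ(φ)‖u*‖_H + ε‖φ‖_{B*}`, where `σ(φ)` is the distance from `Kφ` to
`span{Kφₙ}` and `ε² = max{(z−z†)ᵀA(z−z†) : F(z)=y, zᵀΘ⁻¹z ≤ ‖u*‖²}` with
`A` the Gram matrix of the gamblets in `B`. -/
theorem stmt_12 {H B : Type*} [NormedAddCommGroup H] [InnerProductSpace ℝ H] [CompleteSpace H]
    [NormedAddCommGroup B] [InnerProductSpace ℝ B] [CompleteSpace B]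
    (N M : ℕ) (φ : Fin N → H →L[ℝ] ℝ)
    (k : Fin N → H) (hk : ∀ n v, φ n v = ⟪k n, v⟫)
    (Θ : Matrix (Fin N) (Fin N) ℝ) (hΘdef : ∀ i j, Θ i j = φ i (k j))
    (hΘ : IsUnit Θ.det)
    (χ : Fin N → H) (hχ : ∀ i, χ i = ∑ n, Θ⁻¹ i n • k n)
    (ι : H →L[ℝ] B) (hι : Function.Injective ι)
    (φB : B →L[ℝ] ℝ)
    (kφ : H) (hkφ : ∀ v : H, φB (ι v) = ⟪kφ, v⟫)
    (F : (Fin N → ℝ) → (Fin M → ℝ)) (y : Fin M → ℝ)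
    (ustar : H) (hstar : F (fun n => φ n ustar) = y)
    (zdag : Fin N → ℝ) (hzfeas : F zdag = y)
    (hzmin : ∀ z : Fin N → ℝ, F z = y → zdag ⬝ᵥ Θ⁻¹.mulVec zdag ≤ z ⬝ᵥ Θ⁻¹.mulVec z)
    (udag : H) (hudag : udag = ∑ n, zdag n • χ n)
    (A : Matrix (Fin N) (Fin N) ℝ) (hA : ∀ i j, A i j = ⟪ι (χ i), ι (χ j)⟫)
    (σ : ℝ) (hσ : σ = Metric.infDist kφ (Submodule.span ℝ (Set.range k) : Set H))
    (ε : ℝ) (hε0 : 0 ≤ ε)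
    (hε : IsGreatest {r : ℝ | ∃ z : Fin N → ℝ, F z = y ∧
      z ⬝ᵥ Θ⁻¹.mulVec z ≤ ‖ustar‖ ^ 2 ∧
      r = (z - zdag) ⬝ᵥ A.mulVec (z - zdag)} (ε ^ 2)) :
    |φB (ι udag) - φB (ι ustar)| ≤ σ * ‖ustar‖ + ε * ‖φB‖ := by
  classical
  set zs : Fin N → ℝ := fun n => φ n ustar with hzs
  set ubar : H := ∑ n, zs n • χ n with hubar
  have hmul' : Θ⁻¹ * Θ = 1 := Matrix.nonsing_inv_mul Θ hΘ
  have hΘsym : ∀ i j, Θ i j = Θ j i := fun i j => by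
    rw [hΘdef, hΘdef, hk, hk, real_inner_comm]
  -- ⟪k i, χ j⟫ = δ_{ji}
  have hkχ : ∀ i j, ⟪k i, χ j⟫ = (1 : Matrix (Fin N) (Fin N) ℝ) j i := by
    intro i j
    have h1 : ⟪k i, χ j⟫ = ∑ n, Θ⁻¹ j n * Θ n i := by
      rw [hχ, inner_sum]
      refine Finset.sum_congr rfl fun n _ => ?_
      rw [real_inner_smul_right, hΘsym n i, hΘdef, hk]
    rw [h1, ← hmul', Matrix.mul_apply]
  -- ⟪χ i, χ j⟫ = Θ⁻¹ i j
  have hχχ : ∀ i j, ⟪χ i, χ j⟫ = Θ⁻¹ i j := by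
    intro i j
    rw [hχ i, sum_inner]
    have : ∀ m, ⟪Θ⁻¹ i m • k m, χ j⟫ = Θ⁻¹ i m * (1 : Matrix (Fin N) (Fin N) ℝ) j m := by
      intro m; rw [real_inner_smul_left, hkχ]
    rw [Finset.sum_congr rfl fun m _ => this m]
    simp [Matrix.one_apply]
  -- k i ⊥ (ustar - ubar)
  have hkd : ∀ i, ⟪k i, ustar - ubar⟫ = 0 := by
    intro i
    rw [inner_sub_right]
    have h1 : ⟪k i, ubar⟫ = zs i := by
      rw [hubar, inner_sum]
      have : ∀ j, ⟪k i, zs j • χ j⟫ = zs j * (1 : Matrix (Fin N) (Fin N) ℝ) j i := by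
        intro j; rw [real_inner_smul_right, hkχ]
      rw [Finset.sum_congr rfl fun j _ => this j]
      simp [Matrix.one_apply]
    have h2 : ⟪k i, ustar⟫ = zs i := (hk i ustar).symm
    rw [h1, h2, sub_self]
  have hχd : ∀ i, ⟪χ i, ustar - ubar⟫ = 0 := by
    intro i
    rw [hχ, sum_inner]
    refine Finset.sum_eq_zero fun n _ => ?_
    rw [real_inner_smul_left, hkd, mul_zero]
  have hubar_orth : ⟪ubar, ustar - ubar⟫ = 0 := by
    rw [hubar, sum_inner]
    refine Finset.sum_eq_zero fun n _ => ?_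
    rw [real_inner_smul_left, hχd, mul_zero]
  -- Pythagoras
  have hpyth : ‖ustar‖ ^ 2 = ‖ubar‖ ^ 2 + ‖ustar - ubar‖ ^ 2 := by
    have h := norm_add_sq_real ubar (ustar - ubar)
    rw [hubar_orth] at h
    rw [show ubar + (ustar - ubar) = ustar from by abel] at h
    linarith
  have hle : ‖ustar - ubar‖ ≤ ‖ustar‖ := by
    nlinarith [norm_nonneg (ustar - ubar), norm_nonneg ustar, norm_nonneg ubar]
  have hσ0 : 0 ≤ σ := hσ ▸ Metric.infDist_nonneg
  -- orthogonality to the whole span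
  have hspan_orth : ∀ w ∈ (Submodule.span ℝ (Set.range k) : Submodule ℝ H),
      ⟪w, ustar - ubar⟫ = 0 := by
    intro w hw
    induction hw using Submodule.span_induction with
    | mem x hx => obtain ⟨i, rfl⟩ := hx; exact hkd i
    | zero => simp
    | add x y hx hy hx' hy' => rw [inner_add_left, hx', hy', add_zero]
    | smul c x hx hx' => rw [real_inner_smul_left, hx', mul_zero]
  -- bound 1
  have hb1 : |⟪kφ, ustar - ubar⟫| ≤ σ * ‖ustar - ubar‖ := by
    by_cases hd0 : ustar - ubar = 0
    · simp [hd0]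
    · have hdn : 0 < ‖ustar - ubar‖ := norm_pos_iff.mpr hd0
      have key : ∀ w ∈ (Submodule.span ℝ (Set.range k) : Set H),
          |⟪kφ, ustar - ubar⟫| / ‖ustar - ubar‖ ≤ dist kφ w := by
        intro w hw
        have h0 : ⟪w, ustar - ubar⟫ = 0 := hspan_orth w hw
        have habs : |⟪kφ, ustar - ubar⟫| = |⟪kφ - w, ustar - ubar⟫| := by
          rw [inner_sub_left, h0, sub_zero]
        rw [habs, dist_eq_norm, div_le_iff₀ hdn]
        exact abs_real_inner_le_norm _ _
      have hne : (Submodule.span ℝ (Set.range k) : Set H).Nonempty :=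
        ⟨0, Submodule.zero_mem _⟩
      have h2 : |⟪kφ, ustar - ubar⟫| / ‖ustar - ubar‖ ≤
          Metric.infDist kφ (Submodule.span ℝ (Set.range k) : Set H) := by
        by_contra hc
        push_neg at hc
        obtain ⟨w, hw, hlt⟩ := (Metric.infDist_lt_iff hne).mp hc
        exact absurd (key w hw) (not_le.mpr hlt)
      rw [← hσ, div_le_iff₀ hdn] at h2
      exact h2
  have t1 : |φB (ι ubar) - φB (ι ustar)| ≤ σ * ‖ustar‖ := by
    rw [hkφ, hkφ, ← inner_sub_right]
    have : |⟪kφ, ubar - ustar⟫| = |⟪kφ, ustar - ubar⟫| := by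
      rw [show ubar - ustar = -(ustar - ubar) from by abel, inner_neg_right, abs_neg]
    rw [this]
    calc |⟪kφ, ustar - ubar⟫| ≤ σ * ‖ustar - ubar‖ := hb1
      _ ≤ σ * ‖ustar‖ := by exact mul_le_mul_of_nonneg_left hle hσ0
  -- bound 2
  have hιdiff : ι udag - ι ubar = ∑ n, (zdag n - zs n) • ι (χ n) := by
    rw [hudag, hubar, map_sum, map_sum, ← Finset.sum_sub_distrib]
    refine Finset.sum_congr rfl fun n _ => ?_
    rw [ContinuousLinearMap.map_smul, ContinuousLinearMap.map_smul, ← sub_smul]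
  have hq2 : ‖ι udag - ι ubar‖ ^ 2 = (zs - zdag) ⬝ᵥ A.mulVec (zs - zdag) := by
    rw [← real_inner_self_eq_norm_sq, hιdiff, sum_inner]
    simp only [dotProduct, mulVec, Pi.sub_apply]
    refine Finset.sum_congr rfl fun i _ => ?_
    rw [real_inner_smul_left, inner_sum, Finset.mul_sum, Finset.mul_sum]
    refine Finset.sum_congr rfl fun j _ => ?_
    rw [real_inner_smul_right, hA]
    ring
  have hubar_norm : ‖ubar‖ ^ 2 = zs ⬝ᵥ Θ⁻¹.mulVec zs := by
    rw [← real_inner_self_eq_norm_sq, hubar, sum_inner]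
    simp only [dotProduct, mulVec]
    refine Finset.sum_congr rfl fun i _ => ?_
    rw [real_inner_smul_left, inner_sum, Finset.mul_sum, Finset.mul_sum]
    refine Finset.sum_congr rfl fun j _ => ?_
    rw [real_inner_smul_right, hχχ]
    ring
  have hfeas : zs ⬝ᵥ Θ⁻¹.mulVec zs ≤ ‖ustar‖ ^ 2 := by
    rw [← hubar_norm]
    nlinarith [norm_nonneg (ustar - ubar)]
  have hmem : (zs - zdag) ⬝ᵥ A.mulVec (zs - zdag) ∈ {r : ℝ | ∃ z : Fin N → ℝ, F z = y ∧
      z ⬝ᵥ Θ⁻¹.mulVec z ≤ ‖ustar‖ ^ 2 ∧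
      r = (z - zdag) ⬝ᵥ A.mulVec (z - zdag)} := ⟨zs, hstar, hfeas, rfl⟩
  have hq2le : ‖ι udag - ι ubar‖ ^ 2 ≤ ε ^ 2 := hq2 ▸ hε.2 hmem
  have hqle : ‖ι udag - ι ubar‖ ≤ ε := by
    nlinarith [norm_nonneg (ι udag - ι ubar)]
  have t2 : |φB (ι udag) - φB (ι ubar)| ≤ ε * ‖φB‖ := by
    have h1 : φB (ι udag) - φB (ι ubar) = φB (ι udag - ι ubar) := by
      rw [map_sub]
    rw [h1]
    have h2 : |φB (ι udag - ι ubar)| ≤ ‖φB‖ * ‖ι udag - ι ubar‖ := by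
      have := φB.le_opNorm (ι udag - ι ubar)
      rwa [Real.norm_eq_abs] at this
    calc |φB (ι udag - ι ubar)| ≤ ‖φB‖ * ‖ι udag - ι ubar‖ := h2
      _ ≤ ‖φB‖ * ε := mul_le_mul_of_nonneg_left hqle (norm_nonneg _)
      _ = ε * ‖φB‖ := mul_comm _ _
  calc |φB (ι udag) - φB (ι ustar)|
      ≤ |φB (ι udag) - φB (ι ubar)| + |φB (ι ubar) - φB (ι ustar)| := abs_sub_le _ _ _
    _ ≤ ε * ‖φB‖ + σ * ‖ustar‖ := add_le_add t2 t1
    _ = σ * ‖ustar‖ + ε * ‖φB‖ := by ring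
end

section
/- Relaxed-problem minimizer bound and representer form: Let H be a Hilbert space, φ₁,…,φ_N ∈ H* with invertible Gram matrix Θ, F : R^N → R^M continuous, y ∈ R^M, β > 0. Then the problem minimize over u ∈ H of ‖u‖² + β⁻²|F(Φ(u)) − y|² has a minimizer of the form u†_β = Σ_n z_n χ_n where z minimizes zᵀΘ⁻¹z + β⁻²|F(z) − y|² over R^N; moreover if there exists u* ∈ H with F(Φ(u*)) = y then ‖u†_β‖ ≤ ‖u*‖. -/
open Matrix
open scoped RealInnerProductSpace

/-- Relaxed-problem minimizer bound and representer form (setup of Proposition 3.5):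
the relaxed problem `min ‖u‖² + β⁻²|F(Φ(u)) − y|²` has a minimizer of the form
`u†_β = Σₙ zₙ χₙ` with `z` minimizing the finite-dimensional relaxed objective; and if
`u*` satisfies `F(Φ(u*)) = y` then `‖u†_β‖ ≤ ‖u*‖`. -/
theorem stmt_14 {H : Type*} [NormedAddCommGroup H] [InnerProductSpace ℝ H] [CompleteSpace H]
    (N M : ℕ) (φ : Fin N → H →L[ℝ] ℝ)
    (k : Fin N → H) (hk : ∀ n v, φ n v = ⟪k n, v⟫)
    (Θ : Matrix (Fin N) (Fin N) ℝ) (hΘdef : ∀ i j, Θ i j = φ i (k j))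
    (hΘ : IsUnit Θ.det)
    (χ : Fin N → H) (hχ : ∀ i, χ i = ∑ n, Θ⁻¹ i n • k n)
    (F : (Fin N → ℝ) → EuclideanSpace ℝ (Fin M)) (hF : Continuous F)
    (y : EuclideanSpace ℝ (Fin M)) (β : ℝ) (hβ : 0 < β) :
    ∃ z : Fin N → ℝ,
      (∀ z' : Fin N → ℝ,
        z ⬝ᵥ Θ⁻¹.mulVec z + (β ^ 2)⁻¹ * ‖F z - y‖ ^ 2 ≤
          z' ⬝ᵥ Θ⁻¹.mulVec z' + (β ^ 2)⁻¹ * ‖F z' - y‖ ^ 2) ∧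
      (∀ u : H,
        ‖∑ n, z n • χ n‖ ^ 2 + (β ^ 2)⁻¹ * ‖F (fun m => φ m (∑ n, z n • χ n)) - y‖ ^ 2 ≤
          ‖u‖ ^ 2 + (β ^ 2)⁻¹ * ‖F (fun m => φ m u) - y‖ ^ 2) ∧
      (∀ ustar : H, F (fun m => φ m ustar) = y → ‖∑ n, z n • χ n‖ ≤ ‖ustar‖) := by
  classical
  -- Symmetry of the Gram matrix and basic consequences
  have hsymm : Θᵀ = Θ := by
    ext i j
    simp only [transpose_apply, hΘdef, hk]
    exact real_inner_comm _ _
  have hinvsymm : ∀ i j, Θ⁻¹ i j = Θ⁻¹ j i := by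
    intro i j
    conv_lhs => rw [← hsymm, ← transpose_nonsing_inv]
    rfl
  have hmul : Θ * Θ⁻¹ = 1 := mul_nonsing_inv Θ hΘ
  -- Biorthogonality: φ m (χ i) = δ_{m i}
  have hbio : ∀ m i, φ m (χ i) = (1 : Matrix (Fin N) (Fin N) ℝ) m i := by
    intro m i
    rw [hχ, map_sum]
    simp only [_root_.map_smul, smul_eq_mul]
    rw [← hmul, Matrix.mul_apply]
    refine Finset.sum_congr rfl fun n _ => ?_
    rw [← hΘdef, hinvsymm]
    ring
  -- Φ of a combination of gamblets recovers the coefficients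
  have hphi : ∀ (z : Fin N → ℝ) m, φ m (∑ n, z n • χ n) = z m := by
    intro z m
    rw [map_sum]
    simp only [_root_.map_smul, smul_eq_mul, hbio]
    simp [Matrix.one_apply]
  -- Inner products of gamblets
  have hinner : ∀ i j, ⟪χ i, χ j⟫ = Θ⁻¹ i j := by
    intro i j
    conv_lhs => rw [hχ i]
    rw [sum_inner]
    have : ∀ n, ⟪Θ⁻¹ i n • k n, χ j⟫ = Θ⁻¹ i n * (1 : Matrix (Fin N) (Fin N) ℝ) n j := by
      intro n
      rw [real_inner_smul_left, ← hk, hbio]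
    simp only [this]
    simp [Matrix.one_apply]
  -- Norm-squared formula: ‖Σ zₙ χₙ‖² = zᵀ Θ⁻¹ z
  have hnorm : ∀ (z : Fin N → ℝ), ‖∑ n, z n • χ n‖ ^ 2 = z ⬝ᵥ Θ⁻¹.mulVec z := by
    intro z
    rw [← real_inner_self_eq_norm_sq, sum_inner]
    simp only [dotProduct, Matrix.mulVec, real_inner_smul_left, inner_sum,
      real_inner_smul_right, hinner, Finset.mul_sum]
    refine Finset.sum_congr rfl fun i _ => Finset.sum_congr rfl fun j _ => ?_
    ring
  -- Projection inequality: Φ(u)ᵀ Θ⁻¹ Φ(u) ≤ ‖u‖²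
  have hproj : ∀ u : H,
      (fun m => φ m u) ⬝ᵥ Θ⁻¹.mulVec (fun m => φ m u) ≤ ‖u‖ ^ 2 := by
    intro u
    set w : Fin N → ℝ := fun m => φ m u with hw
    set p : H := ∑ n, w n • χ n with hp
    have horth : ⟪p, u - p⟫ = 0 := by
      rw [hp, sum_inner]
      refine Finset.sum_eq_zero fun n _ => ?_
      rw [real_inner_smul_left, hχ, sum_inner]
      have : ∀ m ∈ Finset.univ, ⟪Θ⁻¹ n m • k m, u - p⟫ = 0 := by
        intro m _
        rw [real_inner_smul_left, ← hk, map_sub, hp, hphi]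
        simp [hw]
      rw [Finset.sum_eq_zero this, mul_zero]
    have hpy : ‖u‖ ^ 2 = ‖p‖ ^ 2 + ‖u - p‖ ^ 2 := by
      have h2 : u = p + (u - p) := by abel
      calc ‖u‖ ^ 2 = ‖p + (u - p)‖ ^ 2 := by rw [← h2]
        _ = ‖p‖ ^ 2 + 2 * ⟪p, u - p⟫ + ‖u - p‖ ^ 2 := norm_add_sq_real _ _
        _ = ‖p‖ ^ 2 + ‖u - p‖ ^ 2 := by rw [horth]; ring
    rw [← hnorm w, hpy]
    nlinarith [norm_nonneg (u - p)]
  -- Existence of a finite-dimensional minimizer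
  set g : (Fin N → ℝ) → ℝ :=
    fun z => z ⬝ᵥ Θ⁻¹.mulVec z + (β ^ 2)⁻¹ * ‖F z - y‖ ^ 2 with hg
  have hgc : Continuous g := by
    apply Continuous.add
    · simp only [dotProduct, Matrix.mulVec]
      exact continuous_finset_sum _ fun i _ => (continuous_apply i).mul
        (continuous_finset_sum _ fun j _ => continuous_const.mul (continuous_apply j))
    · exact continuous_const.mul (((hF.sub continuous_const).norm).pow 2)
  set C : ℝ := (∑ m, ‖φ m‖) + 1 with hC
  have hCpos : 0 < C := by
    have : (0:ℝ) ≤ ∑ m, ‖φ m‖ := Finset.sum_nonneg fun m _ => norm_nonneg _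
    linarith
  have hb : ∀ z : Fin N → ℝ, ‖z‖ ≤ C * ‖∑ n, z n • χ n‖ := by
    intro z
    rw [pi_norm_le_iff_of_nonneg (by positivity)]
    intro m
    calc ‖z m‖ = ‖φ m (∑ n, z n • χ n)‖ := by rw [hphi]
      _ ≤ ‖φ m‖ * ‖∑ n, z n • χ n‖ := (φ m).le_opNorm _
      _ ≤ C * ‖∑ n, z n • χ n‖ := by
          apply mul_le_mul_of_nonneg_right _ (norm_nonneg _)
          have : ‖φ m‖ ≤ ∑ i, ‖φ i‖ :=
            Finset.single_le_sum (fun i _ => norm_nonneg (φ i)) (Finset.mem_univ m)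
          linarith
  have hlow : ∀ z : Fin N → ℝ, (‖z‖ / C) ^ 2 ≤ g z := by
    intro z
    have h1 : (‖z‖ / C) ^ 2 ≤ ‖∑ n, z n • χ n‖ ^ 2 := by
      apply pow_le_pow_left₀ (by positivity)
      rw [div_le_iff₀ hCpos, mul_comm]
      exact hb z
    have h2 : (0:ℝ) ≤ (β ^ 2)⁻¹ * ‖F z - y‖ ^ 2 := by positivity
    rw [hnorm z] at h1
    simp only [hg]
    linarith
  have htend : Filter.Tendsto (fun z : Fin N → ℝ => (‖z‖ / C) ^ 2)
      (Filter.cocompact _) Filter.atTop := by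
    have h1 : Filter.Tendsto (fun z : Fin N → ℝ => ‖z‖) (Filter.cocompact _) Filter.atTop :=
      tendsto_norm_cocompact_atTop
    exact (Filter.tendsto_pow_atTop two_ne_zero).comp (h1.atTop_div_const hCpos)
  have hev : ∀ᶠ z in Filter.cocompact (Fin N → ℝ), g 0 ≤ g z := by
    filter_upwards [htend.eventually_ge_atTop (g 0)] with z hz
    exact le_trans hz (hlow z)
  obtain ⟨z, hzmin⟩ := hgc.exists_forall_le' 0 hev
  refine ⟨z, hzmin, ?_, ?_⟩
  -- the H-minimizer property
  · intro u
    have h1 : (fun m => φ m (∑ n, z n • χ n)) = z := funext fun m => hphi z m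
    rw [h1, hnorm z]
    calc g z ≤ g (fun m => φ m u) := hzmin _
      _ ≤ ‖u‖ ^ 2 + (β ^ 2)⁻¹ * ‖F (fun m => φ m u) - y‖ ^ 2 := by
          simp only [hg]
          have := hproj u
          linarith
  -- the norm bound
  · intro ustar hstar
    have h1 : (fun m => φ m (∑ n, z n • χ n)) = z := funext fun m => hphi z m
    have hpen : (0:ℝ) ≤ (β ^ 2)⁻¹ * ‖F z - y‖ ^ 2 := by positivity
    have h2 : ‖∑ n, z n • χ n‖ ^ 2 ≤ g z := by
      rw [hnorm z]; simp only [hg]; linarith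
    have h3 : g (fun m => φ m ustar) ≤ ‖ustar‖ ^ 2 := by
      simp only [hg, hstar, sub_self]
      have := hproj ustar
      simp only [norm_zero]
      nlinarith
    have h4 : ‖∑ n, z n • χ n‖ ^ 2 ≤ ‖ustar‖ ^ 2 :=
      le_trans h2 (le_trans (hzmin _) h3)
    nlinarith [norm_nonneg (∑ n, z n • χ n), norm_nonneg ustar]
end

section
/- Convergence of the collocation minimizers (abstract version): Let U ⊂ H ⊂ C(Ω̄) with U compactly embedded in H and H continuously embedded in C(Ω̄) for a compact Ω̄ ⊂ R^d, and suppose the PDE operator P : H → C(Ω) and boundary operator B : H → C(∂Ω) are continuous maps. Suppose the PDE P(u) = f on Ω, B(u) = g on ∂Ω has a unique solution u* ∈ U. Let (u†_M) ⊂ U satisfy ‖u†_M‖_U ≤ ‖u*‖_U, P(u†_M)(x_m) = f(x_m) at interior collocation points and B(u†_M)(x_m) = g(x_m) at boundary collocation points, where the fill distances of the interior points in Ω and the boundary points in ∂Ω tend to 0 as M → ∞. Then u†_M → u* in H (and pointwise on Ω). -/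
/-!
The approximants `ι (u†_M)` lie in the image of a ball under the compact operator `ι`, so it
suffices to show that every cluster point `h` of them equals `ι u*`. Along a filter realising
`h`, the residuals `P (ι u†_M)` converge to `P h` in `C(ℝᵈ, ℝ)`, and they agree with the
continuous function `P (ι u*)` on collocation sets that eventually come arbitrarily close to
every point of `Ω`; hence `P h = P (ι u*) = f` on `Ω`, and likewise `B h = g` on `∂Ω`.
Uniqueness of the solution gives `h = ι u*`.
-/

open Filter Topology

theorem eq_of_tendsto_of_eventually_eqOn {α Φ E Y : Type*} [TopologicalSpace E]
    [TopologicalSpace Y] [T2Space Y] [FunLike Φ E Y] [TopologicalSpace Φ] [ContinuousEval Φ E Y]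
    {l : Filter α} [l.NeBot] {F : α → Φ} {F₀ : Φ} (hF : Tendsto F l (𝓝 F₀))
    {G : E → Y} {x : E} (hG : ContinuousAt G x) {X : α → Set E}
    (hcol : ∀ᶠ a in l, Set.EqOn (F a) G (X a)) (hx : ∀ s ∈ 𝓝 x, ∀ᶠ a in l, (X a ∩ s).Nonempty) :
    F₀ x = G x := by
  -- Pairs `(a, y)` with `y ∈ X a`, `a → l` and `y → x`; along them `F a y = G y`.
  set 𝓕 := l ×ˢ 𝓝 x ⊓ 𝓟 {p : α × E | p.2 ∈ X p.1}
  have : 𝓕.NeBot := inf_principal_neBot_iff.2 fun U hU => by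
    obtain ⟨t, ht, s, hs, hts⟩ := mem_prod_iff.1 hU
    obtain ⟨a, ⟨y, hyX, hys⟩, hat⟩ := ((hx s hs).and ht).exists
    exact ⟨(a, y), hts ⟨hat, hys⟩, hyX⟩
  have hfst : Tendsto Prod.fst 𝓕 l := tendsto_fst.mono_left inf_le_left
  have hsnd : Tendsto Prod.snd 𝓕 (𝓝 x) := tendsto_snd.mono_left inf_le_left
  refine tendsto_nhds_unique (((hF.comp hfst).eval hsnd).congr' ?_) (hG.tendsto.comp hsnd)
  filter_upwards [hfst.eventually hcol, mem_inf_of_right (mem_principal_self _)] with p hp hpX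
  exact hp hpX

theorem eventually_inter_nonempty_of_fill {α E : Type*} [Preorder α] [PseudoMetricSpace E]
    {S : Set E} {X : α → Set E}
    (hfill : ∀ ε > 0, ∃ M₀, ∀ M ≥ M₀, ∀ x ∈ S, ∃ x' ∈ X M, dist x x' < ε) {x : E} (hx : x ∈ S)
    {s : Set E} (hs : s ∈ 𝓝 x) : ∀ᶠ M in atTop, (X M ∩ s).Nonempty := by
  obtain ⟨ε, hε, hball⟩ := Metric.mem_nhds_iff.1 hs
  obtain ⟨M₀, hM₀⟩ := hfill ε hε
  filter_upwards [eventually_ge_atTop M₀] with M hM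
  obtain ⟨x', hx'X, hxx'⟩ := hM₀ M hM x hx
  exact ⟨x', hx'X, hball (Metric.mem_ball'.2 hxx')⟩

theorem eqOn_of_tendsto_of_eqOn_fill {α H E Y : Type*} [Preorder α] [TopologicalSpace H]
    [PseudoMetricSpace E] [LocallyCompactSpace E] [TopologicalSpace Y] [T2Space Y]
    {Q : H → C(E, Y)} (hQ : Continuous Q) {l : Filter α} [l.NeBot] (hl : l ≤ atTop)
    {v : α → H} {h : H} (hv : Tendsto v l (𝓝 h)) {w : H} {S : Set E} {X : α → Set E}
    (hfill : ∀ ε > 0, ∃ M₀, ∀ M ≥ M₀, ∀ x ∈ S, ∃ x' ∈ X M, dist x x' < ε)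
    (hcol : ∀ M, Set.EqOn (Q (v M)) (Q w) (X M)) :
    Set.EqOn (Q h) (Q w) S := fun _ hx =>
  eq_of_tendsto_of_eventually_eqOn ((hQ.tendsto h).comp hv) (Q w).continuous.continuousAt
    (.of_forall hcol) fun _ hs => hl (eventually_inter_nonempty_of_fill hfill hx hs)

theorem stmt_16_general {U H : Type*} [NormedAddCommGroup U] [NormedSpace ℝ U]
    [NormedAddCommGroup H] [NormedSpace ℝ H]
    (d : ℕ) (Ω : Set (EuclideanSpace ℝ (Fin d)))
    (ι : U →L[ℝ] H) (hιcpt : IsCompactOperator ι)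
    (ιC : H →L[ℝ] C(EuclideanSpace ℝ (Fin d), ℝ))
    (P B : H → C(EuclideanSpace ℝ (Fin d), ℝ)) (hP : Continuous P) (hB : Continuous B)
    (f g : EuclideanSpace ℝ (Fin d) → ℝ)
    (ustar : U)
    (hsolI : ∀ x ∈ Ω, P (ι ustar) x = f x)
    (hsolB : ∀ x ∈ frontier Ω, B (ι ustar) x = g x)
    (huniq : ∀ h : H, (∀ x ∈ Ω, P h x = f x) → (∀ x ∈ frontier Ω, B h x = g x) →
      h = ι ustar)
    (XI XB : ℕ → Finset (EuclideanSpace ℝ (Fin d)))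
    (hXI : ∀ M, (XI M : Set (EuclideanSpace ℝ (Fin d))) ⊆ Ω)
    (hXB : ∀ M, (XB M : Set (EuclideanSpace ℝ (Fin d))) ⊆ frontier Ω)
    (hfillI : ∀ ε > 0, ∃ M₀, ∀ M ≥ M₀, ∀ x ∈ Ω, ∃ x' ∈ XI M, dist x x' < ε)
    (hfillB : ∀ ε > 0, ∃ M₀, ∀ M ≥ M₀, ∀ x ∈ frontier Ω, ∃ x' ∈ XB M, dist x x' < ε)
    (udag : ℕ → U)
    (hbound : ∀ M, ‖udag M‖ ≤ ‖ustar‖)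
    (hcolI : ∀ M, ∀ x ∈ XI M, P (ι (udag M)) x = f x)
    (hcolB : ∀ M, ∀ x ∈ XB M, B (ι (udag M)) x = g x) :
    Tendsto (fun M => ι (udag M)) atTop (nhds (ι ustar)) ∧
    ∀ x ∈ Ω, Tendsto (fun M => ιC (ι (udag M)) x) atTop (nhds (ιC (ι ustar) x)) := by
  set v := fun M => ι (udag M)
  have hconv : Tendsto v atTop (𝓝 (ι ustar)) := by
    refine (hιcpt.isCompact_closure_image_closedBall ‖ustar‖).tendsto_nhds_of_unique_mapClusterPt
      (.of_forall fun M => subset_closure ⟨udag M, mem_closedBall_zero_iff.2 (hbound M), rfl⟩)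
      fun h _ hh => ?_
    have : (atTop ⊓ comap v (𝓝 h)).NeBot := by
      rwa [← map_neBot_iff v, Filter.push_pull, inf_comm]
    have hv : Tendsto v (atTop ⊓ comap v (𝓝 h)) (𝓝 h) := tendsto_comap.mono_left inf_le_right
    have hPh := eqOn_of_tendsto_of_eqOn_fill hP inf_le_left hv hfillI
      fun M y hy => (hcolI M y hy).trans (hsolI y (hXI M hy)).symm
    have hBh := eqOn_of_tendsto_of_eqOn_fill hB inf_le_left hv hfillB
      fun M y hy => (hcolB M y hy).trans (hsolB y (hXB M hy)).symm
    exact huniq h (fun x hx => (hPh hx).trans (hsolI x hx))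
      fun x hx => (hBh hx).trans (hsolB x hx)
  exact ⟨hconv, fun x _ => ((ιC.continuous.tendsto _).comp hconv).eval_const x⟩

/-- Convergence of the collocation minimizers, abstract version (Theorem 3.3):
with `U` compactly embedded in `H`, `H` continuously embedded in continuous functions,
continuous PDE operators `P, B`, a unique solution `u*`, norm-bounded collocation
minimizers `u†_M` satisfying the PDE at interior/boundary collocation points whose
fill distances tend to `0`, one has `u†_M → u*` in `H` and pointwise on `Ω`. -/
theorem stmt_16 {U H : Type*} [NormedAddCommGroup U] [NormedSpace ℝ U]
    [NormedAddCommGroup H] [NormedSpace ℝ H]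
    (d : ℕ) (Ω : Set (EuclideanSpace ℝ (Fin d)))
    (hΩcl : IsCompact (closure Ω))
    (ι : U →L[ℝ] H) (hιinj : Function.Injective ι) (hιcpt : IsCompactOperator ι)
    (ιC : H →L[ℝ] C(EuclideanSpace ℝ (Fin d), ℝ)) (hιCinj : Function.Injective ιC)
    (P B : H → C(EuclideanSpace ℝ (Fin d), ℝ)) (hP : Continuous P) (hB : Continuous B)
    (f g : EuclideanSpace ℝ (Fin d) → ℝ)
    (ustar : U)
    (hsolI : ∀ x ∈ Ω, P (ι ustar) x = f x)
    (hsolB : ∀ x ∈ frontier Ω, B (ι ustar) x = g x)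
    (huniq : ∀ h : H, (∀ x ∈ Ω, P h x = f x) → (∀ x ∈ frontier Ω, B h x = g x) →
      h = ι ustar)
    (XI XB : ℕ → Finset (EuclideanSpace ℝ (Fin d)))
    (hXI : ∀ M, (XI M : Set (EuclideanSpace ℝ (Fin d))) ⊆ Ω)
    (hXB : ∀ M, (XB M : Set (EuclideanSpace ℝ (Fin d))) ⊆ frontier Ω)
    (hfillI : ∀ ε > 0, ∃ M₀, ∀ M ≥ M₀, ∀ x ∈ Ω, ∃ x' ∈ XI M, dist x x' < ε)
    (hfillB : ∀ ε > 0, ∃ M₀, ∀ M ≥ M₀, ∀ x ∈ frontier Ω, ∃ x' ∈ XB M, dist x x' < ε)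
    (udag : ℕ → U)
    (hbound : ∀ M, ‖udag M‖ ≤ ‖ustar‖)
    (hcolI : ∀ M, ∀ x ∈ XI M, P (ι (udag M)) x = f x)
    (hcolB : ∀ M, ∀ x ∈ XB M, B (ι (udag M)) x = g x) :
    Tendsto (fun M => ι (udag M)) atTop (nhds (ι ustar)) ∧
    ∀ x ∈ Ω, Tendsto (fun M => ιC (ι (udag M)) x) atTop (nhds (ιC (ι ustar) x)) :=
  stmt_16_general d Ω ι hιcpt ιC P B hP hB f g ustar hsolI hsolB huniq XI XB hXI hXB hfillI hfillB
    udag hbound hcolI hcolB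
end
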